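/- If t ∈ [0,1) is not a b-adic rational (i.e., t ∉ {k/bᵐ : m ∈ ℕ₀, 0 ≤ k < bᵐ}), then [0,t) is not a bounded remainder interval for the van der Corput sequence in base b: the quantity #{n < N : Y_b(n) ∈ [0,t)} − N·t is unbounded in N. -/

import Mathlib

open scoped Classical

/-- The b-adic radical inverse (van der Corput) function. -/
noncomputable def vdc (b n : ℕ) : ℝ :=
  ∑ j ∈ Finset.range (n + 1), ((n / b ^ j % b : ℕ) : ℝ) / (b : ℝ) ^ (j + 1)

/-!
Let `D(N) = #{n < N : vdc b n < t} - N t` and write `{x}` for the fractional part. For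
`r < b ^ m`, `vdc b (c * b ^ m + r) = (r' + vdc b c) / b ^ m`, where `r'` is `r` with its `m`
lowest digits reversed, and `r ↦ r'` permutes `[0, b ^ m)`. Hence if `vdc b c < {b ^ m t}`, the
block `[c b ^ m, (c + 1) b ^ m)` contains exactly `⌊b ^ m t⌋ + 1` hits and adds `1 - {b ^ m t}`
to `D`. If `b ^ (m + g) ∣ N` then `vdc b (N / b ^ m) < b ^ (-g)`, so appending a block of length
`b ^ m` to `[0, N)` raises `D` by at least `1 / b` as soon as `{b ^ m t} ≤ 1 - 1 / b` and
`b ^ (-g) ≤ {b ^ m t}`. The first condition holds for infinitely many `m` (otherwise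
`1 - {b ^ m t}` would grow geometrically), the second for large `g` because `{b ^ m t} > 0` when
`t` is not `b`-adic. Choosing the block lengths from the largest down, `D` exceeds any bound.
-/

lemma Nat.floor_add_fract {R : Type*} [Ring R] [LinearOrder R] [FloorRing R] [IsOrderedRing R]
    {x : R} (hx : 0 ≤ x) : (⌊x⌋₊ : R) + Int.fract x = x := by
  have h := Int.floor_add_fract x
  rwa [← Int.natCast_floor_eq_floor hx, Int.cast_natCast] at h

lemma one_sub_fract_natCast_mul {b : ℕ} {x : ℝ} (hb : 0 < b) (hx : 1 - 1 / b < Int.fract x) :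
    1 - Int.fract (b * x) = b * (1 - Int.fract x) := by
  have hbR : (0 : ℝ) < b := by exact_mod_cast hb
  have hbx : b * Int.fract x ∈ Set.Ioo ((b : ℝ) - 1) b := by
    constructor
    · calc (b : ℝ) - 1 = b * (1 - 1 / b) := by field_simp
        _ < b * Int.fract x := by gcongr
    · nlinarith [Int.fract_lt_one x]
  have hsplit : (b : ℝ) * x = b * ⌊x⌋ + b * Int.fract x := by rw [← mul_add, Int.floor_add_fract]
  have hfloor : ⌊(b : ℝ) * x⌋ = b * ⌊x⌋ + (b - 1) := by
    rw [Int.floor_eq_iff]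
    push_cast
    constructor <;> linarith [hbx.1, hbx.2]
  rw [Int.fract, hfloor, Int.fract]
  push_cast
  ring

lemma exists_fract_pow_mul_le {b : ℕ} (hb : 1 < b) (t : ℝ) (M : ℕ) :
    ∃ m, M ≤ m ∧ Int.fract ((b : ℝ) ^ m * t) ≤ 1 - 1 / b := by
  by_contra! hlarge
  have hgrow : ∀ k, 1 - Int.fract ((b : ℝ) ^ (M + k) * t)
      = (b : ℝ) ^ k * (1 - Int.fract ((b : ℝ) ^ M * t)) := by
    intro k
    induction k with
    | zero => simp
    | succ k ih =>
      rw [← add_assoc, pow_succ', mul_assoc,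
        one_sub_fract_natCast_mul (by omega) (hlarge _ (by omega)), ih, pow_succ']
      ring
  have hgap : 0 < 1 - Int.fract ((b : ℝ) ^ M * t) := sub_pos.mpr (Int.fract_lt_one _)
  obtain ⟨k, hk⟩ := pow_unbounded_of_one_lt (1 - Int.fract ((b : ℝ) ^ M * t))⁻¹
    (by exact_mod_cast hb : (1 : ℝ) < b)
  rw [inv_lt_iff_one_lt_mul₀ hgap, ← hgrow] at hk
  linarith [Int.fract_nonneg ((b : ℝ) ^ (M + k) * t)]

lemma fract_pow_mul_pos {b : ℕ} {t : ℝ} (hb : 0 < b) (ht : 0 ≤ t)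
    (hirr : ∀ m k : ℕ, t ≠ (k : ℝ) / (b : ℝ) ^ m) (m : ℕ) :
    0 < Int.fract ((b : ℝ) ^ m * t) := by
  refine (Int.fract_nonneg _).lt_of_ne fun hzero => hirr m ⌊(b : ℝ) ^ m * t⌋₊ ?_
  have h := Nat.floor_add_fract (by positivity : 0 ≤ (b : ℝ) ^ m * t)
  rw [← hzero, add_zero] at h
  rw [h, mul_div_cancel_left₀ _ (by positivity)]

def digitRev (b : ℕ) : ℕ → ℕ → ℕ
  | 0, _ => 0
  | m + 1, r => r % b * b ^ m + digitRev b m (r / b)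

section digitRev
variable {b : ℕ}

@[simp]
lemma digitRev_zero_right (m : ℕ) : digitRev b m 0 = 0 := by
  induction m with
  | zero => rfl
  | succ m ih => simp [digitRev, ih]

lemma digitRev_lt (hb : 0 < b) (m r : ℕ) : digitRev b m r < b ^ m := by
  induction m generalizing r with
  | zero => simp [digitRev]
  | succ m ih =>
    have hdigit : r % b + 1 ≤ b := Nat.mod_lt r hb
    calc digitRev b (m + 1) r < r % b * b ^ m + b ^ m := Nat.add_lt_add_left (ih _) _
      _ = (r % b + 1) * b ^ m := by ring
      _ ≤ b ^ (m + 1) := by rw [pow_succ']; gcongr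

lemma digitRev_injOn (hb : 0 < b) (m : ℕ) :
    Set.InjOn (digitRev b m) (Set.Iio (b ^ m)) := by
  induction m with
  | zero => intro r hr s hs _; simp_all
  | succ m ih =>
    intro r hr s hs hrs
    simp only [Set.mem_Iio, pow_succ'] at hr hs
    have hlow : ∀ x, (digitRev b (m + 1) x) % b ^ m = digitRev b m (x / b) := fun x => by
      rw [digitRev, Nat.mul_add_mod', Nat.mod_eq_of_lt (digitRev_lt hb m _)]
    have hhigh : ∀ x, (digitRev b (m + 1) x) / b ^ m = x % b := fun x => by
      rw [digitRev, Nat.add_comm, Nat.add_mul_div_right _ _ (by positivity),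
        Nat.div_eq_of_lt (digitRev_lt hb m _), zero_add]
    have hquot : r / b = s / b :=
      ih (Nat.div_lt_of_lt_mul hr) (Nat.div_lt_of_lt_mul hs) (by rw [← hlow, ← hlow, hrs])
    have hrem : r % b = s % b := by rw [← hhigh, ← hhigh, hrs]
    rw [← Nat.div_add_mod r b, ← Nat.div_add_mod s b, hquot, hrem]

lemma digitRev_bijOn (hb : 0 < b) (m : ℕ) :
    Set.BijOn (digitRev b m) (Set.Iio (b ^ m)) (Set.Iio (b ^ m)) :=
  (Set.finite_Iio _).injOn_iff_bijOn_of_mapsTo (fun r _ => digitRev_lt hb m r) |>.mp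
    (digitRev_injOn hb m)

end digitRev

section vdc
variable {b : ℕ}

lemma vdc_eq_sum_range (hb : 1 < b) {n M : ℕ} (hM : n < M) :
    vdc b n = ∑ j ∈ Finset.range M, ((n / b ^ j % b : ℕ) : ℝ) / (b : ℝ) ^ (j + 1) := by
  refine Finset.sum_subset (Finset.range_subset_range.mpr hM) fun j hjM hjn => ?_
  simp only [Finset.mem_range, not_lt] at hjn
  have hlt : n < b ^ j := (Nat.lt_pow_self hb).trans_le (Nat.pow_le_pow_right (by omega) (by omega))
  simp [Nat.div_eq_of_lt hlt]

@[simp]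
lemma vdc_zero : vdc b 0 = 0 := by simp [vdc]

lemma vdc_nonneg (n : ℕ) : 0 ≤ vdc b n := by
  unfold vdc; positivity

lemma vdc_mul_add (hb : 1 < b) (c : ℕ) {a : ℕ} (ha : a < b) :
    vdc b (c * b + a) = (a + vdc b c) / b := by
  have hc : c < c * b + a + 1 := by nlinarith
  rw [vdc_eq_sum_range hb (M := c * b + a + 1 + 1) (by omega), Finset.sum_range_succ',
    vdc_eq_sum_range hb hc, add_div, Finset.sum_div, add_comm]
  congr 1
  · simp [Nat.mod_eq_of_lt ha]
  · refine Finset.sum_congr rfl fun j _ => ?_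
    have hdiv : (c * b + a) / b = c := by
      rw [Nat.add_comm, Nat.add_mul_div_right _ _ (by omega), Nat.div_eq_of_lt ha, zero_add]
    rw [pow_succ', ← Nat.div_div_eq_div_mul, hdiv, pow_succ _ (j + 1), div_div]

lemma vdc_mul_pow_add (hb : 1 < b) (c : ℕ) {m r : ℕ} (hr : r < b ^ m) :
    vdc b (c * b ^ m + r) = (digitRev b m r + vdc b c) / (b : ℝ) ^ m := by
  induction m generalizing r with
  | zero => simp_all [digitRev]
  | succ m ih =>
    have hsplit : c * b ^ (m + 1) + r = (c * b ^ m + r / b) * b + r % b := by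
      rw [pow_succ, add_mul, mul_assoc, add_assoc, Nat.div_add_mod']
    rw [hsplit, vdc_mul_add hb _ (Nat.mod_lt _ (by omega)),
      ih (Nat.div_lt_of_lt_mul (by rwa [← pow_succ'])), digitRev]
    push_cast
    field_simp
    ring

lemma vdc_mul_pow (hb : 1 < b) (c m : ℕ) : vdc b (c * b ^ m) = vdc b c / (b : ℝ) ^ m := by
  simpa using vdc_mul_pow_add hb c (pow_pos (Nat.zero_lt_of_lt hb) m)

lemma vdc_lt_one (hb : 1 < b) (n : ℕ) : vdc b n < 1 := by
  have hpos : (0 : ℝ) < (b : ℝ) ^ n := by positivity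
  have h := vdc_mul_pow_add hb 0 (Nat.lt_pow_self (n := n) hb)
  rw [zero_mul, zero_add, vdc_zero, add_zero] at h
  rw [h, div_lt_one hpos]
  exact_mod_cast digitRev_lt (Nat.zero_lt_of_lt hb) n n

end vdc

section discrepancy
variable {b : ℕ} {t : ℝ}

noncomputable def vdcDiscrepancy (b : ℕ) (t : ℝ) (N : ℕ) : ℝ :=
  (((Finset.range N).filter (fun n => vdc b n ∈ Set.Ico (0 : ℝ) t)).card : ℝ) - (N : ℝ) * t

lemma vdcDiscrepancy_add (b : ℕ) (t : ℝ) (N M : ℕ) :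
    vdcDiscrepancy b t (N + M) = vdcDiscrepancy b t N
      + ((Finset.range M).filter (fun r => vdc b (N + r) ∈ Set.Ico (0 : ℝ) t)).card - M * t := by
  simp only [vdcDiscrepancy, Finset.card_filter, Finset.sum_range_add]
  push_cast
  ring

lemma vdc_mul_pow_add_lt_iff (hb : 1 < b) (ht : 0 ≤ t) {c m r : ℕ}
    (hc : vdc b c < Int.fract ((b : ℝ) ^ m * t)) (hr : r < b ^ m) :
    vdc b (c * b ^ m + r) < t ↔ digitRev b m r ≤ ⌊(b : ℝ) ^ m * t⌋₊ := by
  have hpow : (0 : ℝ) < (b : ℝ) ^ m := by positivity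
  have hX : 0 ≤ (b : ℝ) ^ m * t := by positivity
  have hfloor := Nat.floor_add_fract hX
  rw [vdc_mul_pow_add hb c hr, div_lt_iff₀ hpow, mul_comm t]
  constructor
  · intro h
    exact Nat.le_floor (by linarith [vdc_nonneg (b := b) c])
  · intro h
    have h' : (digitRev b m r : ℝ) ≤ ⌊(b : ℝ) ^ m * t⌋₊ := by exact_mod_cast h
    linarith

lemma card_filter_vdc_mul_pow_add (hb : 1 < b) (ht : t ∈ Set.Ico (0 : ℝ) 1) {c m : ℕ}
    (hc : vdc b c < Int.fract ((b : ℝ) ^ m * t)) :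
    ((Finset.range (b ^ m)).filter (fun r => vdc b (c * b ^ m + r) ∈ Set.Ico (0 : ℝ) t)).card
      = ⌊(b : ℝ) ^ m * t⌋₊ + 1 := by
  have hbij := digitRev_bijOn (Nat.zero_lt_of_lt hb) m
  have hfloor_lt : ⌊(b : ℝ) ^ m * t⌋₊ < b ^ m := by
    rw [Nat.floor_lt (by positivity [ht.1])]
    push_cast
    nlinarith [ht.2, pow_pos (by positivity : (0 : ℝ) < b) m]
  calc _ = ((Finset.range (b ^ m)).filter (fun r => digitRev b m r ≤ ⌊(b : ℝ) ^ m * t⌋₊)).card := by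
        refine congrArg Finset.card (Finset.filter_congr fun r hr => ?_)
        rw [Set.mem_Ico, and_iff_right (vdc_nonneg _),
          vdc_mul_pow_add_lt_iff hb ht.1 hc (Finset.mem_range.mp hr)]
    _ = ((Finset.range (b ^ m)).filter (· ≤ ⌊(b : ℝ) ^ m * t⌋₊)).card := by
        simp only [Finset.card_filter]
        rw [← Finset.coe_range] at hbij
        exact Finset.sum_nbij (digitRev b m) (fun r hr => hbij.mapsTo hr) hbij.injOn hbij.surjOn
          fun _ _ => rfl
    _ = ⌊(b : ℝ) ^ m * t⌋₊ + 1 := by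
        rw [← Finset.card_range (⌊(b : ℝ) ^ m * t⌋₊ + 1)]
        congr 1
        ext k
        simp only [Finset.mem_filter, Finset.mem_range]
        omega

lemma le_vdcDiscrepancy_add_pow (hb : 1 < b) (ht : t ∈ Set.Ico (0 : ℝ) 1) {N m g : ℕ}
    (hN : b ^ (m + g) ∣ N) (hgap : 1 ≤ (b : ℝ) ^ g * Int.fract ((b : ℝ) ^ m * t))
    (hfract : Int.fract ((b : ℝ) ^ m * t) ≤ 1 - 1 / b) :
    vdcDiscrepancy b t N + 1 / b ≤ vdcDiscrepancy b t (N + b ^ m) := by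
  obtain ⟨c, rfl⟩ := hN
  have hpow : (0 : ℝ) < (b : ℝ) ^ g := by positivity
  have hc : vdc b (c * b ^ g) < Int.fract ((b : ℝ) ^ m * t) := by
    rw [vdc_mul_pow hb, div_lt_iff₀ hpow]
    linarith [vdc_lt_one hb c]
  have hN : b ^ (m + g) * c = c * b ^ g * b ^ m := by ring
  rw [hN, vdcDiscrepancy_add, card_filter_vdc_mul_pow_add hb ht hc]
  have h := Nat.floor_add_fract (by positivity [ht.1] : 0 ≤ (b : ℝ) ^ m * t)
  push_cast
  linarith

lemma exists_dvd_le_vdcDiscrepancy (hb : 1 < b) (ht : t ∈ Set.Ico (0 : ℝ) 1)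
    (hpos : ∀ m, 0 < Int.fract ((b : ℝ) ^ m * t)) (K p : ℕ) :
    ∃ N, b ^ p ∣ N ∧ (K : ℝ) / b ≤ vdcDiscrepancy b t N := by
  induction K generalizing p with
  | zero => exact ⟨0, dvd_zero _, by simp [vdcDiscrepancy]⟩
  | succ K ih =>
    obtain ⟨m, hpm, hfract⟩ := exists_fract_pow_mul_le hb t p
    obtain ⟨g, hg⟩ := pow_unbounded_of_one_lt (Int.fract ((b : ℝ) ^ m * t))⁻¹
      (by exact_mod_cast hb : (1 : ℝ) < b)
    rw [inv_lt_iff_one_lt_mul₀ (hpos m)] at hg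
    obtain ⟨N, hN, hK⟩ := ih (m + g)
    refine ⟨N + b ^ m, dvd_add ((pow_dvd_pow b (by omega)).trans hN) (pow_dvd_pow b hpm), ?_⟩
    have := le_vdcDiscrepancy_add_pow hb ht hN hg.le hfract
    push_cast
    rw [add_div]
    linarith

end discrepancy

/-- If `t ∈ [0,1)` is not a `b`-adic rational, then `[0,t)` is not a bounded remainder
interval for the van der Corput sequence in base `b`. -/
theorem vdc_not_bounded_remainder (b : ℕ) (hb : 2 ≤ b) (t : ℝ)
    (ht : t ∈ Set.Ico (0 : ℝ) 1)
    (hirr : ∀ m k : ℕ, t ≠ (k : ℝ) / (b : ℝ) ^ m) :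
    ∀ C : ℝ, ∃ N : ℕ,
      C < |(((Finset.range N).filter (fun n => vdc b n ∈ Set.Ico (0 : ℝ) t)).card : ℝ)
        - (N : ℝ) * t| := by
  intro C
  obtain ⟨K, hK⟩ := exists_nat_gt (C * b)
  obtain ⟨N, -, hN⟩ := exists_dvd_le_vdcDiscrepancy hb ht
    (fract_pow_mul_pos (by omega) ht.1 hirr) K 0
  have hCK : C < K / b := (lt_div_iff₀ (by positivity)).mpr hK
  exact ⟨N, hCK.trans_le (hN.trans (le_abs_self _))⟩
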